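/- arXiv:1209.3804 — 3 statements merged into one kernel-verified Lean document; each statement's English description precedes it below -/
import Mathlib

section
/- Let M be an n×n positive semidefinite Hermitian matrix with eigendecomposition M = U Σ U^H, where Σ = diag(σ₁,…,σ_n) with eigenvalues in descending order, and let P ≤ rank(M). If B = Ξ U_P^H where Ξ is any invertible P×P matrix and U_P consists of the first P columns of U, then Tr[M^H B^H (B M B^H)^{-1} B M] = σ₁ + σ₂ + ⋯ + σ_P. -/
open scoped ComplexOrder
open Matrix BigOperators

/-- With `B = Ξ Uₚᴴ` for invertible `Ξ`, the matrix `B M Bᴴ` is invertible and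
`Tr[Mᴴ Bᴴ (B M Bᴴ)⁻¹ B M] = σ₁ + ⋯ + σ_P`. -/
theorem stmt0 {n P : ℕ} (hPn : P ≤ n)
    (U : Matrix (Fin n) (Fin n) ℂ) (hU : U ∈ Matrix.unitaryGroup (Fin n) ℂ)
    (σ : Fin n → ℝ) (hdesc : ∀ i j : Fin n, i ≤ j → σ j ≤ σ i)
    (hnonneg : ∀ i, 0 ≤ σ i)
    (hpos : ∀ p : Fin P, 0 < σ (Fin.castLE hPn p))
    (M : Matrix (Fin n) (Fin n) ℂ)
    (hM : M = U * Matrix.diagonal (fun i => (σ i : ℂ)) * Uᴴ)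
    (Ξ : Matrix (Fin P) (Fin P) ℂ) (hΞ : IsUnit Ξ.det)
    (UP : Matrix (Fin n) (Fin P) ℂ) (hUP : ∀ i p, UP i p = U i (Fin.castLE hPn p))
    (B : Matrix (Fin P) (Fin n) ℂ) (hB : B = Ξ * UPᴴ) :
    IsUnit (B * M * Bᴴ).det ∧
      Matrix.trace (Mᴴ * Bᴴ * (B * M * Bᴴ)⁻¹ * (B * M)) =
        (∑ p : Fin P, (σ (Fin.castLE hPn p) : ℂ)) := by
  set e : Fin P → Fin n := Fin.castLE hPn with he_def
  have he : Function.Injective e := Fin.castLE_injective hPn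
  set d : Fin n → ℂ := fun i => (σ i : ℂ) with hd_def
  set C : Matrix (Fin n) (Fin P) ℂ := Matrix.of (fun j p => if j = e p then 1 else 0) with hC_def
  have hU1 : Uᴴ * U = 1 := by
    have := hU.1
    rwa [Matrix.star_eq_conjTranspose] at this
  -- key diagonal conjugation lemma
  have L1 : ∀ f : Fin n → ℂ, Cᴴ * Matrix.diagonal f * C = Matrix.diagonal (fun p => f (e p)) := by
    intro f
    ext p q
    simp only [Matrix.mul_apply, Matrix.conjTranspose_apply, hC_def, Matrix.of_apply,
      Matrix.diagonal_apply, apply_ite (star : ℂ → ℂ), star_one, star_zero]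
    simp only [ite_mul, one_mul, zero_mul, Finset.sum_ite_eq', Finset.mem_univ, if_true]
    by_cases h : p = q
    · subst h; simp
    · simp only [h, if_false, Finset.sum_ite_eq, Finset.mem_univ, if_true, mul_ite, mul_one,
        mul_zero]
      rw [if_neg (fun hh => h (he hh) : ¬ e p = e q)]
  have hUP' : UP = U * C := by
    ext i p
    simp [hUP, hC_def, Matrix.mul_apply]
  have hd0 : ∀ p : Fin P, d (e p) ≠ 0 := fun p =>
    Complex.ofReal_ne_zero.mpr (hpos p).ne'
  set DP : Matrix (Fin P) (Fin P) ℂ := Matrix.diagonal (fun p => d (e p)) with hDP_def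
  have hB' : B = Ξ * Cᴴ * Uᴴ := by
    rw [hB, hUP', Matrix.conjTranspose_mul, Matrix.mul_assoc]
  have hcancP : ∀ X : Matrix (Fin n) (Fin P) ℂ, Uᴴ * (U * X) = X := fun X => by
    rw [← Matrix.mul_assoc, hU1, Matrix.one_mul]
  have hcancN : ∀ X : Matrix (Fin n) (Fin n) ℂ, Uᴴ * (U * X) = X := fun X => by
    rw [← Matrix.mul_assoc, hU1, Matrix.one_mul]
  have hBM : B * M = Ξ * (Cᴴ * (Matrix.diagonal d * Uᴴ)) := by
    rw [hB', hM]
    simp only [Matrix.mul_assoc]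
    rw [hcancN (Matrix.diagonal d * Uᴴ)]
  have hKey : B * M * Bᴴ = Ξ * DP * Ξᴴ := by
    rw [hBM, hB']
    simp only [Matrix.conjTranspose_mul, Matrix.conjTranspose_conjTranspose]
    simp only [Matrix.mul_assoc]
    rw [hcancP (C * Ξᴴ)]
    rw [show Cᴴ * (Matrix.diagonal d * (C * Ξᴴ)) = DP * Ξᴴ from by
      rw [← Matrix.mul_assoc, ← Matrix.mul_assoc, L1 d]]
  have hDPdet : IsUnit DP.det := by
    rw [hDP_def, Matrix.det_diagonal]
    exact isUnit_iff_ne_zero.mpr (Finset.prod_ne_zero_iff.mpr fun p _ => hd0 p)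
  have hΞH : IsUnit Ξᴴ.det := by
    rw [Matrix.det_conjTranspose]; exact hΞ.star
  have hdet : IsUnit (B * M * Bᴴ).det := by
    rw [hKey, Matrix.det_mul, Matrix.det_mul]
    exact (hΞ.mul hDPdet).mul hΞH
  refine ⟨hdet, ?_⟩
  have hinv : (B * M * Bᴴ)⁻¹ = (Ξᴴ)⁻¹ * (DP⁻¹ * Ξ⁻¹) := by
    rw [hKey, Matrix.mul_inv_rev, Matrix.mul_inv_rev]
  have hDPinv : DP⁻¹ = Matrix.diagonal (fun p => (d (e p))⁻¹) := by
    apply Matrix.inv_eq_right_inv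
    rw [hDP_def, Matrix.diagonal_mul_diagonal,
      show (fun p => d (e p) * (d (e p))⁻¹) = fun _ => (1 : ℂ) from
        funext fun p => mul_inv_cancel₀ (hd0 p)]
    exact Matrix.diagonal_one
  have hds : (Matrix.diagonal d)ᴴ = Matrix.diagonal d := by
    have hsd : star d = d := by
      funext i
      simp [hd_def]
    rw [Matrix.diagonal_conjTranspose, hsd]
  have hMH : Mᴴ * Bᴴ = U * (Matrix.diagonal d * (C * Ξᴴ)) := by
    rw [← Matrix.conjTranspose_mul, hBM]
    simp only [Matrix.conjTranspose_mul, Matrix.conjTranspose_conjTranspose, hds]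
    simp only [Matrix.mul_assoc]
  have cΞH : ∀ Y : Matrix (Fin P) (Fin n) ℂ, Ξᴴ * ((Ξᴴ)⁻¹ * Y) = Y := fun Y => by
    rw [← Matrix.mul_assoc, Matrix.mul_nonsing_inv _ hΞH, Matrix.one_mul]
  have cΞ : ∀ Y : Matrix (Fin P) (Fin n) ℂ, Ξ⁻¹ * (Ξ * Y) = Y := fun Y => by
    rw [← Matrix.mul_assoc, Matrix.nonsing_inv_mul _ hΞ, Matrix.one_mul]
  have htrace : Mᴴ * Bᴴ * (B * M * Bᴴ)⁻¹ * (B * M)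
      = U * (Matrix.diagonal d * (C * (DP⁻¹ * (Cᴴ * (Matrix.diagonal d * Uᴴ))))) := by
    rw [hMH, hinv, hBM]
    simp only [Matrix.mul_assoc]
    rw [cΞH, cΞ]
  rw [htrace]
  have hX : Matrix.diagonal d * (C * (DP⁻¹ * (Cᴴ * (Matrix.diagonal d * Uᴴ))))
      = (Matrix.diagonal d * C * DP⁻¹ * (Cᴴ * Matrix.diagonal d)) * Uᴴ := by
    simp only [Matrix.mul_assoc]
  rw [hX, ← Matrix.mul_assoc, Matrix.trace_mul_comm, hcancN _]
  rw [Matrix.trace_mul_cycle]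
  have hmid : Cᴴ * Matrix.diagonal d * (Matrix.diagonal d * C)
      = Matrix.diagonal (fun p => d (e p) * d (e p)) := by
    have : Cᴴ * Matrix.diagonal d * (Matrix.diagonal d * C)
        = Cᴴ * Matrix.diagonal (fun i => d i * d i) * C := by
      rw [show Matrix.diagonal (fun i => d i * d i) = Matrix.diagonal d * Matrix.diagonal d from by
        rw [Matrix.diagonal_mul_diagonal]]
      simp only [Matrix.mul_assoc]
    rw [this, L1]
  rw [hmid, hDPinv, Matrix.diagonal_mul_diagonal, Matrix.trace_diagonal]
  refine Finset.sum_congr rfl fun p _ => ?_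
  rw [mul_inv_cancel_right₀ (hd0 p)]
end

section
/- Let M = U Σ U^H be Hermitian positive semidefinite with P ≤ rank(M), U_P the first P eigenvectors, Σ_P the corresponding positive eigenvalues, and B = Ξ U_P^H with Ξ invertible. Then for any vectors β, β' ∈ ℂ^L, the quadratic form (β−β')^H M^H B^H (B M B^H)^{-1} B M (β−β') equals (β−β')^H U_P Σ_P U_P^H (β−β'). -/
open scoped ComplexOrder
open Matrix BigOperators

/-- With `B = Ξ Uₚᴴ` (`Ξ` invertible), the quadratic form
`δᴴ Mᴴ Bᴴ (B M Bᴴ)⁻¹ B M δ` with `δ = β − β'` equals `δᴴ Uₚ Σₚ Uₚᴴ δ`. -/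
theorem stmt6 {L P : ℕ} (hPL : P ≤ L)
    (U : Matrix (Fin L) (Fin L) ℂ) (hU : U ∈ Matrix.unitaryGroup (Fin L) ℂ)
    (σ : Fin L → ℝ) (hdesc : ∀ i j : Fin L, i ≤ j → σ j ≤ σ i)
    (hnonneg : ∀ i, 0 ≤ σ i)
    (hpos : ∀ p : Fin P, 0 < σ (Fin.castLE hPL p))
    (M : Matrix (Fin L) (Fin L) ℂ)
    (hM : M = U * Matrix.diagonal (fun i => (σ i : ℂ)) * Uᴴ)
    (Ξ : Matrix (Fin P) (Fin P) ℂ) (hΞ : IsUnit Ξ.det)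
    (UP : Matrix (Fin L) (Fin P) ℂ) (hUP : ∀ i p, UP i p = U i (Fin.castLE hPL p))
    (B : Matrix (Fin P) (Fin L) ℂ) (hB : B = Ξ * UPᴴ)
    (SigP : Matrix (Fin P) (Fin P) ℂ)
    (hSigP : SigP = Matrix.diagonal (fun p => (σ (Fin.castLE hPL p) : ℂ)))
    (β β' : Fin L → ℂ) :
    star (β - β') ⬝ᵥ (Mᴴ * Bᴴ * (B * M * Bᴴ)⁻¹ * (B * M)).mulVec (β - β') =
      star (β - β') ⬝ᵥ (UP * SigP * UPᴴ).mulVec (β - β') := by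
  have hUU : Uᴴ * U = 1 := by
    simpa [Matrix.star_eq_conjTranspose] using (Matrix.mem_unitaryGroup_iff'.mp hU)
  have hUUP : Uᴴ * UP =
      Matrix.of (fun i p => if i = Fin.castLE hPL p then (1:ℂ) else 0) := by
    ext i p
    have h1 : (Uᴴ * UP) i p = (Uᴴ * U) i (Fin.castLE hPL p) := by
      simp [Matrix.mul_apply, hUP]
    rw [h1, hUU]
    simp [Matrix.one_apply]
  have hMUP : M * UP = UP * SigP := by
    have e1 : M * UP = U * (Matrix.diagonal (fun i => (σ i : ℂ)) * (Uᴴ * UP)) := by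
      simp only [hM, Matrix.mul_assoc]
    rw [e1, hUUP, hSigP]
    ext i p
    simp [Matrix.mul_apply, Matrix.diagonal_apply, hUP, mul_ite, ite_mul,
      Finset.sum_ite_eq, Finset.sum_ite_eq', mul_comm]
  have hUPUP : UPᴴ * UP = 1 := by
    ext p q
    have h1 : (UPᴴ * UP) p q = (Uᴴ * U) (Fin.castLE hPL p) (Fin.castLE hPL q) := by
      simp [Matrix.mul_apply, hUP]
    rw [h1, hUU]
    simp [Matrix.one_apply, Fin.castLE_inj]
  have hstar1 : (star fun i => ((σ i : ℂ))) = fun i => ((σ i : ℂ)) := by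
    funext i; simp [Complex.star_def, Complex.conj_ofReal]
  have hstar2 : (star fun p => ((σ (Fin.castLE hPL p) : ℂ)))
      = fun p => ((σ (Fin.castLE hPL p) : ℂ)) := by
    funext p; simp [Complex.star_def, Complex.conj_ofReal]
  have hMherm : Mᴴ = M := by
    rw [hM]
    simp [Matrix.conjTranspose_mul, Matrix.diagonal_conjTranspose, Matrix.mul_assoc, hstar1]
  have hSherm : SigPᴴ = SigP := by
    rw [hSigP, Matrix.diagonal_conjTranspose, hstar2]
  have hUPM : UPᴴ * M = SigP * UPᴴ := by
    have h := congrArg Matrix.conjTranspose hMUP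
    rw [Matrix.conjTranspose_mul, Matrix.conjTranspose_mul, hMherm, hSherm] at h
    exact h
  have hBM : B * M = Ξ * (SigP * UPᴴ) := by
    rw [hB, Matrix.mul_assoc, hUPM]
  have hBH : Bᴴ = UP * Ξᴴ := by
    rw [hB]; simp [Matrix.conjTranspose_mul]
  have hBMBH : B * M * Bᴴ = Ξ * SigP * Ξᴴ := by
    rw [hBM, hBH]
    simp only [Matrix.mul_assoc]
    rw [← Matrix.mul_assoc UPᴴ UP, hUPUP, Matrix.one_mul]
  have hMB : Mᴴ * Bᴴ = UP * (SigP * Ξᴴ) := by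
    have h := congrArg Matrix.conjTranspose hBM
    rw [Matrix.conjTranspose_mul] at h
    rw [h]
    simp [Matrix.conjTranspose_mul, hSherm, Matrix.mul_assoc]
  have hSdet : IsUnit SigP.det := by
    rw [hSigP, Matrix.det_diagonal]
    refine isUnit_iff_ne_zero.mpr (Finset.prod_ne_zero_iff.mpr fun p _ => ?_)
    exact Complex.ofReal_ne_zero.mpr (ne_of_gt (hpos p))
  have hXH : IsUnit Ξᴴ.det := by
    rw [Matrix.det_conjTranspose]
    exact hΞ.star
  have hinv : (Ξ * SigP * Ξᴴ)⁻¹ = Ξᴴ⁻¹ * (SigP⁻¹ * Ξ⁻¹) := by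
    rw [Matrix.mul_inv_rev, Matrix.mul_inv_rev]
  have key : Mᴴ * Bᴴ * (B * M * Bᴴ)⁻¹ * (B * M) = UP * SigP * UPᴴ := by
    rw [hMB, hBMBH, hinv, hBM]
    have h1 : Ξᴴ * Ξᴴ⁻¹ = 1 := Matrix.mul_nonsing_inv _ hXH
    have h2 : Ξ⁻¹ * Ξ = 1 := Matrix.nonsing_inv_mul _ hΞ
    have h3 : SigP * SigP⁻¹ = 1 := Matrix.mul_nonsing_inv _ hSdet
    simp only [Matrix.mul_assoc]
    rw [← Matrix.mul_assoc Ξᴴ Ξᴴ⁻¹, h1, Matrix.one_mul, ← Matrix.mul_assoc Ξ⁻¹ Ξ, h2,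
        Matrix.one_mul, ← Matrix.mul_assoc SigP SigP⁻¹, h3, Matrix.one_mul]
  rw [key]
end

section
/- Subject to the constraint B = W^H for W ∈ ℂ^{L×P} of full column rank, the trace Tr[(W^H M W)^{-1} W^H M M^H W] is maximized, over all W such that W^H M W is invertible, by taking the columns of W to be the generalized eigenvectors of the pair (M, M M^H) corresponding to the P largest generalized eigenvalues; when M is Hermitian PSD these are the top-P eigenvectors of M and the maximal value is σ₁ + ⋯ + σ_P. -/
open scoped ComplexOrder
open Matrix BigOperators

lemma weighted_sum_le' {L P : ℕ} (hPL : P ≤ L) (σ : Fin L → ℝ)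
    (hdesc : ∀ i j : Fin L, i ≤ j → σ j ≤ σ i) (hnonneg : ∀ i, 0 ≤ σ i)
    (d : Fin L → ℝ) (hd0 : ∀ i, 0 ≤ d i) (hd1 : ∀ i, d i ≤ 1)
    (hsum : ∑ i, d i ≤ P) :
    ∑ i, σ i * d i ≤ ∑ p : Fin P, σ (Fin.castLE hPL p) := by
  classical
  set t : ℝ := if h : P < L then σ ⟨P, h⟩ else 0 with ht
  have ht0 : 0 ≤ t := by
    rw [ht]; split
    · exact hnonneg _
    · exact le_refl 0
  set S : Finset (Fin L) := Finset.univ.filter (fun i => (i : ℕ) < P) with hS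
  have hSmap : S = Finset.map (Fin.castLEEmb hPL) Finset.univ := by
    ext i
    simp only [hS, Finset.mem_filter, Finset.mem_univ, true_and, Finset.mem_map,
      Fin.castLEEmb_apply]
    constructor
    · intro h; exact ⟨⟨i, h⟩, rfl⟩
    · rintro ⟨p, rfl⟩; exact p.isLt
  have hcard : (S.card : ℝ) = P := by
    rw [hSmap, Finset.card_map, Finset.card_univ, Fintype.card_fin]
  have hre : ∑ p : Fin P, σ (Fin.castLE hPL p) = ∑ i ∈ S, σ i := by
    rw [hSmap, Finset.sum_map]; rfl
  have htlow : ∀ i ∈ S, t ≤ σ i := by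
    intro i hi
    rw [hS, Finset.mem_filter] at hi
    rw [ht]
    split
    · exact hdesc i ⟨P, ‹_›⟩ (le_of_lt hi.2)
    · exact hnonneg i
  have hthigh : ∀ i ∈ Sᶜ, σ i ≤ t := by
    intro i hi
    rw [hS, Finset.mem_compl, Finset.mem_filter] at hi
    have hPi : P ≤ (i : ℕ) := le_of_not_gt (fun h => hi ⟨Finset.mem_univ i, h⟩)
    have hPL' : P < L := lt_of_le_of_lt hPi i.isLt
    rw [ht, dif_pos hPL']
    exact hdesc ⟨P, hPL'⟩ i hPi
  have h1 : ∑ i ∈ S, σ i * d i ≤ ∑ i ∈ S, (σ i - t * (1 - d i)) := by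
    refine Finset.sum_le_sum fun i hi => ?_
    nlinarith [mul_nonneg (sub_nonneg.2 (htlow i hi)) (sub_nonneg.2 (hd1 i))]
  have h2 : ∑ i ∈ Sᶜ, σ i * d i ≤ ∑ i ∈ Sᶜ, t * d i := by
    refine Finset.sum_le_sum fun i hi => ?_
    exact mul_le_mul_of_nonneg_right (hthigh i hi) (hd0 i)
  have hsplit : ∑ i, σ i * d i = ∑ i ∈ S, σ i * d i + ∑ i ∈ Sᶜ, σ i * d i :=
    (Finset.sum_add_sum_compl S _).symm
  have hdsplit : ∑ i ∈ S, d i + ∑ i ∈ Sᶜ, d i ≤ (P : ℝ) := by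
    rw [Finset.sum_add_sum_compl]; exact hsum
  have he1 : ∑ i ∈ S, (σ i - t * (1 - d i)) =
      ∑ i ∈ S, σ i - (t * P - t * ∑ i ∈ S, d i) := by
    rw [Finset.sum_sub_distrib, ← Finset.mul_sum, Finset.sum_sub_distrib]
    simp [mul_sub, Finset.mul_sum, hcard]
  have he2 : ∑ i ∈ Sᶜ, t * d i = t * ∑ i ∈ Sᶜ, d i := by rw [Finset.mul_sum]
  have hmul : t * (∑ i ∈ S, d i + ∑ i ∈ Sᶜ, d i) ≤ t * P :=
    mul_le_mul_of_nonneg_left hdsplit ht0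
  rw [hre, hsplit]
  nlinarith [h1, h2, he1, he2, hmul]

lemma proj_diag_eq' {n : Type*} [Fintype n] [DecidableEq n] (Q : Matrix n n ℂ)
    (hH : Qᴴ = Q) (hI : Q * Q = Q) (i : n) :
    (Q i i).re = ∑ j, Complex.normSq (Q i j) := by
  have h1 : Q i i = ∑ j, Q i j * star (Q i j) := by
    conv_lhs => rw [← hI, mul_apply]
    refine Finset.sum_congr rfl fun j _ => ?_
    congr 1
    conv_lhs => rw [← hH, conjTranspose_apply]
  rw [h1, Complex.re_sum]
  refine Finset.sum_congr rfl fun j _ => ?_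
  rw [Complex.star_def, Complex.mul_conj]
  simp

lemma proj_diag_nonneg' {n : Type*} [Fintype n] [DecidableEq n] (Q : Matrix n n ℂ)
    (hH : Qᴴ = Q) (hI : Q * Q = Q) (i : n) : 0 ≤ (Q i i).re := by
  rw [proj_diag_eq' Q hH hI i]
  exact Finset.sum_nonneg fun j _ => Complex.normSq_nonneg _

lemma proj_diag_le_one' {n : Type*} [Fintype n] [DecidableEq n] (Q : Matrix n n ℂ)
    (hH : Qᴴ = Q) (hI : Q * Q = Q) (i : n) : (Q i i).re ≤ 1 := by
  have hH' : (1 - Q)ᴴ = 1 - Q := by rw [conjTranspose_sub, conjTranspose_one, hH]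
  have hI' : (1 - Q) * (1 - Q) = 1 - Q := by
    rw [sub_mul, mul_sub, mul_sub, hI]
    noncomm_ring
  have := proj_diag_nonneg' (1 - Q) hH' hI' i
  have h1 : ((1 - Q) i i) = 1 - Q i i := by simp [Matrix.sub_apply, Matrix.one_apply]
  rw [h1] at this
  simp at this
  linarith [this]


lemma aux_proj' {L P : ℕ} (σ : Fin L → ℝ) (X : Matrix (Fin L) (Fin P) ℂ)
    (hdetA : IsUnit (Xᴴ * X).det) :
    ∃ Q : Matrix (Fin L) (Fin L) ℂ, Qᴴ = Q ∧ Q * Q = Q ∧ Matrix.trace Q = (P : ℂ) ∧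
      Matrix.trace ((Xᴴ * X)⁻¹ * (Xᴴ * Matrix.diagonal (fun i => (σ i : ℂ)) * X)) =
        Matrix.trace (Matrix.diagonal (fun i => (σ i : ℂ)) * Q) := by
  set D : Matrix (Fin L) (Fin L) ℂ := Matrix.diagonal (fun i => (σ i : ℂ)) with hD
  have hAinv' : (Xᴴ * X) * (Xᴴ * X)⁻¹ = 1 := Matrix.mul_nonsing_inv _ hdetA
  have hAH : ((Xᴴ * X)⁻¹)ᴴ = (Xᴴ * X)⁻¹ := by
    rw [Matrix.conjTranspose_nonsing_inv, Matrix.conjTranspose_mul,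
      Matrix.conjTranspose_conjTranspose]
  refine ⟨X * (Xᴴ * X)⁻¹ * Xᴴ, ?_, ?_, ?_, ?_⟩
  · rw [Matrix.conjTranspose_mul, Matrix.conjTranspose_mul,
      Matrix.conjTranspose_conjTranspose, hAH, Matrix.mul_assoc]
  · calc X * (Xᴴ * X)⁻¹ * Xᴴ * (X * (Xᴴ * X)⁻¹ * Xᴴ)
        = X * ((Xᴴ * X)⁻¹ * ((Xᴴ * X) * ((Xᴴ * X)⁻¹ * Xᴴ))) := by
          simp only [Matrix.mul_assoc]
      _ = X * (Xᴴ * X)⁻¹ * Xᴴ := by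
          rw [← Matrix.mul_assoc (Xᴴ * X), hAinv', Matrix.one_mul, Matrix.mul_assoc]
  · rw [Matrix.trace_mul_comm (X * (Xᴴ * X)⁻¹) Xᴴ, ← Matrix.mul_assoc, hAinv',
      Matrix.trace_one]
    simp
  · rw [Matrix.trace_mul_comm ((Xᴴ * X)⁻¹) (Xᴴ * D * X), Matrix.mul_assoc, Matrix.mul_assoc,
      Matrix.trace_mul_comm Xᴴ (D * (X * (Xᴴ * X)⁻¹))]
    simp only [Matrix.mul_assoc]

/-- Ratio-trace maximization: over full-column-rank `W` with `Wᴴ M W` invertible, the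
objective `Tr[(Wᴴ M W)⁻¹ Wᴴ M Mᴴ W]` is at most `σ₁ + ⋯ + σ_P`, and this value is
attained by `W = U_P`, the top-`P` eigenvectors of the Hermitian PSD matrix `M`. -/
theorem stmt12 {L P : ℕ} (hPL : P ≤ L)
    (U : Matrix (Fin L) (Fin L) ℂ) (hU : U ∈ Matrix.unitaryGroup (Fin L) ℂ)
    (σ : Fin L → ℝ) (hdesc : ∀ i j : Fin L, i ≤ j → σ j ≤ σ i)
    (hnonneg : ∀ i, 0 ≤ σ i)
    (hpos : ∀ p : Fin P, 0 < σ (Fin.castLE hPL p))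
    (M : Matrix (Fin L) (Fin L) ℂ)
    (hM : M = U * Matrix.diagonal (fun i => (σ i : ℂ)) * Uᴴ)
    (UP : Matrix (Fin L) (Fin P) ℂ) (hUP : ∀ i p, UP i p = U i (Fin.castLE hPL p)) :
    (∀ W : Matrix (Fin L) (Fin P) ℂ, W.rank = P → IsUnit (Wᴴ * M * W).det →
        (Matrix.trace ((Wᴴ * M * W)⁻¹ * (Wᴴ * M * Mᴴ * W))).re ≤
          ∑ p : Fin P, σ (Fin.castLE hPL p)) ∧
      Matrix.trace ((UPᴴ * M * UP)⁻¹ * (UPᴴ * M * Mᴴ * UP)) =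
        (∑ p : Fin P, (σ (Fin.castLE hPL p) : ℂ)) := by
  classical
  set D : Matrix (Fin L) (Fin L) ℂ := Matrix.diagonal (fun i => (σ i : ℂ)) with hD
  set Sq : Matrix (Fin L) (Fin L) ℂ := Matrix.diagonal (fun i => (Real.sqrt (σ i) : ℂ)) with hSq
  have hU1 : Uᴴ * U = 1 := by
    have := hU.1
    rwa [Matrix.star_eq_conjTranspose] at this
  have hU2 : U * Uᴴ = 1 := by
    have := hU.2
    rwa [Matrix.star_eq_conjTranspose] at this
  have hSqH : Sqᴴ = Sq := by
    rw [hSq, Matrix.diagonal_conjTranspose]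
    exact congrArg Matrix.diagonal (funext fun i => Complex.conj_ofReal _)
  have hSS : Sq * Sq = D := by
    rw [hSq, hD, Matrix.diagonal_mul_diagonal]
    exact congrArg Matrix.diagonal (funext fun i => by
      rw [← Complex.ofReal_mul, Real.mul_self_sqrt (hnonneg i)])
  have hDH : Dᴴ = D := by
    rw [hD, Matrix.diagonal_conjTranspose]
    exact congrArg Matrix.diagonal (funext fun i => Complex.conj_ofReal _)
  have hMH : Mᴴ = M := by
    rw [hM]
    rw [Matrix.conjTranspose_mul, Matrix.conjTranspose_mul, Matrix.conjTranspose_conjTranspose,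
      hDH, Matrix.mul_assoc]
  have hMM : M * Mᴴ = U * (D * D) * Uᴴ := by
    rw [hMH, hM]
    calc U * D * Uᴴ * (U * D * Uᴴ) = U * D * (Uᴴ * U) * D * Uᴴ := by
          simp only [Matrix.mul_assoc]
      _ = U * (D * D) * Uᴴ := by rw [hU1]; simp only [Matrix.mul_one, Matrix.mul_assoc]
  constructor
  · -- the bound
    intro W _hrank hdet
    set X : Matrix (Fin L) (Fin P) ℂ := Sq * (Uᴴ * W) with hX
    have hXH : Xᴴ = Wᴴ * U * Sq := by
      rw [hX, Matrix.conjTranspose_mul, Matrix.conjTranspose_mul, hSqH,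
        Matrix.conjTranspose_conjTranspose, Matrix.mul_assoc]
    have hA : Wᴴ * M * W = Xᴴ * X := by
      rw [hXH, hX, hM]
      simp only [Matrix.mul_assoc]
      rw [← Matrix.mul_assoc Sq Sq, hSS]
    have hSDS : Sq * (D * Sq) = D * D := by
      rw [hSq, hD, Matrix.diagonal_mul_diagonal, Matrix.diagonal_mul_diagonal,
        Matrix.diagonal_mul_diagonal]
      refine congrArg Matrix.diagonal (funext fun i => ?_)
      rw [← Complex.ofReal_mul, ← Complex.ofReal_mul, ← Complex.ofReal_mul]
      exact congrArg _ (by nlinarith [Real.mul_self_sqrt (hnonneg i)])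
    have hB : Wᴴ * M * Mᴴ * W = Xᴴ * D * X := by
      rw [Matrix.mul_assoc Wᴴ M Mᴴ, hMM, hXH, hX]
      simp only [Matrix.mul_assoc]
      rw [← Matrix.mul_assoc D Sq (Uᴴ * W), ← Matrix.mul_assoc Sq (D * Sq) (Uᴴ * W), hSDS,
        Matrix.mul_assoc]
    have hdetA : IsUnit (Xᴴ * X).det := by rw [← hA]; exact hdet
    obtain ⟨Q, hQH, hQ2, htrQ, hobj⟩ := aux_proj' σ X hdetA
    rw [← hD] at hobj
    have htrDQ : Matrix.trace (D * Q) = ∑ i, (σ i : ℂ) * Q i i := by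
      rw [hD]
      simp [Matrix.trace, Matrix.diag, Matrix.diagonal_mul]
    have hre : (Matrix.trace ((Wᴴ * M * W)⁻¹ * (Wᴴ * M * Mᴴ * W))).re
        = ∑ i, σ i * (Q i i).re := by
      rw [hA, hB, hobj, htrDQ, Complex.re_sum]
      exact Finset.sum_congr rfl fun i _ => Complex.re_ofReal_mul _ _
    have hdsum : ∑ i, (Q i i).re = (P : ℝ) := by
      have : (Matrix.trace Q).re = ((P : ℂ)).re := congrArg Complex.re htrQ
      rwa [Matrix.trace, Complex.re_sum, Complex.natCast_re] at this
    rw [hre]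
    exact weighted_sum_le' hPL σ hdesc hnonneg (fun i => (Q i i).re)
      (fun i => proj_diag_nonneg' Q hQH hQ2 i) (fun i => proj_diag_le_one' Q hQH hQ2 i)
      (le_of_eq hdsum)
  · -- attainment
    set f : Fin P → Fin L := Fin.castLE hPL with hf
    have hkey : ∀ B : Matrix (Fin L) (Fin L) ℂ,
        UPᴴ * B * UP = (Uᴴ * B * U).submatrix f f := by
      intro B
      funext p q
      simp only [Matrix.mul_apply, Matrix.submatrix_apply, Matrix.conjTranspose_apply, hUP,
        Finset.sum_mul, Finset.mul_sum, hf]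
    have hUMU : Uᴴ * M * U = D := by
      rw [hM]
      calc Uᴴ * (U * D * Uᴴ) * U = (Uᴴ * U) * D * (Uᴴ * U) := by simp only [Matrix.mul_assoc]
        _ = D := by rw [hU1, Matrix.one_mul, Matrix.mul_one]
    have hUMMU : Uᴴ * (M * Mᴴ) * U = D * D := by
      rw [hMM]
      calc Uᴴ * (U * (D * D) * Uᴴ) * U = (Uᴴ * U) * (D * D) * (Uᴴ * U) := by
            simp only [Matrix.mul_assoc]
        _ = D * D := by rw [hU1, Matrix.one_mul, Matrix.mul_one]
    have hfi : Function.Injective f := Fin.castLE_injective hPL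
    have h1 : UPᴴ * M * UP = Matrix.diagonal (fun p => (σ (f p) : ℂ)) := by
      rw [hkey M, hUMU, hD, Matrix.submatrix_diagonal _ _ hfi]
      rfl
    have h2 : UPᴴ * M * Mᴴ * UP = Matrix.diagonal (fun p => (σ (f p) : ℂ) * (σ (f p) : ℂ)) := by
      rw [Matrix.mul_assoc UPᴴ M Mᴴ, hkey (M * Mᴴ), hUMMU, hD, Matrix.diagonal_mul_diagonal,
        Matrix.submatrix_diagonal _ _ hfi]
      rfl
    have hne : ∀ p : Fin P, (σ (f p) : ℂ) ≠ 0 := fun p => by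
      simp only [ne_eq, Complex.ofReal_eq_zero]
      exact ne_of_gt (hpos p)
    have hinv : (Matrix.diagonal (fun p => (σ (f p) : ℂ)))⁻¹
        = Matrix.diagonal (fun p => (σ (f p) : ℂ)⁻¹) := by
      refine Matrix.inv_eq_right_inv ?_
      rw [Matrix.diagonal_mul_diagonal]
      have : (fun p => (σ (f p) : ℂ) * (σ (f p) : ℂ)⁻¹) = fun _ => (1 : ℂ) := by
        funext p
        exact mul_inv_cancel₀ (hne p)
      rw [this, Matrix.diagonal_one]
    rw [h1, h2, hinv, Matrix.diagonal_mul_diagonal]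
    have : (fun p => (σ (f p) : ℂ)⁻¹ * ((σ (f p) : ℂ) * (σ (f p) : ℂ)))
        = fun p => (σ (f p) : ℂ) := by
      funext p
      rw [← mul_assoc, inv_mul_cancel₀ (hne p), one_mul]
    rw [this, Matrix.trace_diagonal]
end
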